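/- arXiv:1708.02595 — 5 statements merged into one kernel-verified Lean document; each statement's English description precedes it below -/
import Mathlib

section
/- Let L be a linear operator on a normed vector space and ‖·‖ a norm (or seminorm). Suppose there exists Δt_FE > 0 such that ‖u + Δt L u‖ ≤ ‖u‖ for all u and all 0 ≤ Δt ≤ Δt_FE. Then ‖e^{τL} u‖ ≤ ‖u‖ for all u and all τ ≥ 0. -/
/-!
Taking the forward Euler step `A = 1 + Δt_FE • L` as the basic operator, the condition says
`‖A‖ ≤ 1`, and `τ • L = s • (A - 1)` with `s = τ / Δt_FE`. Since `A` commutes with `1`,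
`exp (τ • L) = e^{-s} • exp (s • A)`, whose norm is at most `e^{-s} e^{s ‖A‖} ≤ 1`.
-/

open NormedSpace

section ExpBound

variable {𝔸 : Type*} [NormedRing 𝔸] [NormedAlgebra ℝ 𝔸]

theorem norm_exp_le_exp_norm [NormOneClass 𝔸] (x : 𝔸) : ‖exp x‖ ≤ Real.exp ‖x‖ := by
  have hs : Summable fun n => ‖(n.factorial⁻¹ : ℝ) • x ^ n‖ := norm_expSeries_summable' x
  calc ‖exp x‖ ≤ ∑' n, ‖(n.factorial⁻¹ : ℝ) • x ^ n‖ := by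
        rw [exp_eq_tsum ℝ]; exact norm_tsum_le_tsum_norm hs
    _ ≤ ∑' n, ‖x‖ ^ n / n.factorial := by
        refine hs.tsum_le_tsum (fun n => ?_) (Real.summable_pow_div_factorial _)
        rw [norm_smul, norm_inv, Real.norm_natCast, div_eq_inv_mul]
        gcongr
        exact norm_pow_le x n
    _ = Real.exp ‖x‖ := by rw [Real.exp_eq_exp_ℝ, exp_eq_tsum_div]

variable [CompleteSpace 𝔸]

theorem exp_smul_sub_one (s : ℝ) (a : 𝔸) :
    exp (s • (a - 1)) = Real.exp (-s) • exp (s • a) := by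
  have hsplit : s • (a - 1) = s • a + algebraMap ℝ 𝔸 (-s) := by
    rw [smul_sub, map_neg, Algebra.algebraMap_eq_smul_one, sub_eq_add_neg]
  let _ : NormedAlgebra ℚ 𝔸 := NormedAlgebra.restrictScalars ℚ ℝ 𝔸
  rw [hsplit, exp_add_of_commute (Algebra.commutes _ _).symm, ← algebraMap_exp_comm,
    ← Real.exp_eq_exp_ℝ, ← Algebra.commutes, ← Algebra.smul_def]

variable [NormOneClass 𝔸]

theorem norm_exp_smul_sub_one_le_one {a : 𝔸} (ha : ‖a‖ ≤ 1) {s : ℝ} (hs : 0 ≤ s) :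
    ‖exp (s • (a - 1))‖ ≤ 1 := by
  rw [exp_smul_sub_one, norm_smul, Real.norm_of_nonneg (Real.exp_pos _).le]
  calc Real.exp (-s) * ‖exp (s • a)‖ ≤ Real.exp (-s) * Real.exp s := by
        gcongr
        refine (norm_exp_le_exp_norm _).trans (Real.exp_le_exp.mpr ?_)
        rw [norm_smul, Real.norm_of_nonneg hs]
        exact mul_le_of_le_one_right hs ha
    _ = 1 := by rw [← Real.exp_add, neg_add_cancel, Real.exp_zero]

theorem norm_exp_smul_le_one_of_norm_one_add_smul_le_one {b : 𝔸} {h : ℝ} (hh : 0 < h)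
    (hb : ‖1 + h • b‖ ≤ 1) {τ : ℝ} (hτ : 0 ≤ τ) : ‖exp (τ • b)‖ ≤ 1 := by
  have hτb : τ • b = (τ / h) • ((1 + h • b) - 1) := by
    rw [add_sub_cancel_left, smul_smul, div_mul_cancel₀ _ hh.ne']
  rw [hτb]
  exact norm_exp_smul_sub_one_le_one hb (div_nonneg hτ hh.le)

end ExpBound

/-- If a bounded linear operator `L` satisfies the forward Euler condition
`‖u + Δt·Lu‖ ≤ ‖u‖` for all `0 ≤ Δt ≤ Δt_FE` (with `Δt_FE > 0`), then
`‖e^{τL} u‖ ≤ ‖u‖` for all `τ ≥ 0`. -/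
theorem exp_monotone_of_forwardEuler
    {X : Type*} [NormedAddCommGroup X] [NormedSpace ℝ X] [CompleteSpace X]
    (L : X →L[ℝ] X) (ΔtFE : ℝ) (hΔtFE : 0 < ΔtFE)
    (hFE : ∀ (u : X) (Δt : ℝ), 0 ≤ Δt → Δt ≤ ΔtFE → ‖u + Δt • L u‖ ≤ ‖u‖) :
    ∀ (u : X) (τ : ℝ), 0 ≤ τ → ‖(exp (τ • L)) u‖ ≤ ‖u‖ := by
  intro u τ hτ
  rcases subsingleton_or_nontrivial X with hX | hX
  · exact (congrArg norm (Subsingleton.elim _ u)).le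
  have hEuler : ‖1 + ΔtFE • L‖ ≤ 1 :=
    ContinuousLinearMap.opNorm_le_bound _ zero_le_one fun v => by
      simpa using hFE v ΔtFE hΔtFE.le le_rfl
  calc ‖exp (τ • L) u‖ ≤ ‖exp (τ • L)‖ * ‖u‖ := (exp (τ • L)).le_opNorm u
    _ ≤ 1 * ‖u‖ := by
        gcongr
        exact norm_exp_smul_le_one_of_norm_one_add_smul_le_one hΔtFE hEuler hτ
    _ = ‖u‖ := one_mul _
end

section
/- Suppose nonnegative reals α_{ij}, β_{ij} (for 0 ≤ j < i ≤ s) satisfy ∑_{j<i} α_{ij} = 1 for each i, with β_{ij} = 0 whenever α_{ij} = 0. Let L satisfy ‖e^{τL}u‖ ≤ ‖u‖ for all τ ≥ 0, and let N satisfy ‖u + hN(u)‖ ≤ ‖u‖ for 0 ≤ h ≤ Δt_FE. Let abscissas satisfy 0 = c_1 ≤ c_2 ≤ ... ≤ c_s. Define u^{(0)} = u^n and u^{(i)} = ∑_{j<i} e^{L(c_i − c_j)Δt}(α_{ij} u^{(j)} + Δt β_{ij} N(u^{(j)})). Then for Δt ≤ C·Δt_FE where C = min_{i,j: β_{ij}>0}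 α_{ij}/β_{ij}, every stage satisfies ‖u^{(i)}‖ ≤ ‖u^n‖; in particular ‖u^{n+1}‖ = ‖u^{(s)}‖ ≤ ‖u^n‖. -/
/-!
Each stage is a convex combination, with weights `α i j`, of vectors
`exp ((c i - c j) Δt L) (u j + (Δt β i j / α i j) N (u j))`. Since `c` is non-decreasing the
exponentials are taken at nonnegative times, hence do not increase the norm, and the bound on
`Δt` keeps every scaled step `Δt β i j / α i j` within the forward Euler range `[0, ΔtFE]`.
Strong induction on the stage index then bounds every stage by `‖u 0‖`.
-/

open NormedSpace Finset

section ForwardEuler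

variable {X : Type*} [NormedAddCommGroup X] [NormedSpace ℝ X]

def IsForwardEulerContractive (N : X → X) (ΔtFE : ℝ) : Prop :=
  ∀ (v : X) (h : ℝ), 0 ≤ h → h ≤ ΔtFE → ‖v + h • N v‖ ≤ ‖v‖

theorem IsForwardEulerContractive.norm_smul_add_smul_le {N : X → X} {ΔtFE : ℝ}
    (hN : IsForwardEulerContractive N ΔtFE) (v : X) {a k : ℝ} (ha : 0 ≤ a) (hk : 0 ≤ k)
    (hka : k ≤ a * ΔtFE) : ‖a • v + k • N v‖ ≤ a * ‖v‖ := by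
  rcases ha.eq_or_lt with rfl | ha
  · obtain rfl : k = 0 := by linarith
    simp
  have hsplit : a • v + k • N v = a • (v + (k / a) • N v) := by
    rw [smul_add, smul_smul, mul_div_cancel₀ k ha.ne']
  rw [hsplit, norm_smul, Real.norm_of_nonneg ha.le]
  gcongr
  exact hN v _ (by positivity) ((div_le_iff₀ ha).2 (by linarith))

theorem IsForwardEulerContractive.norm_sum_exp_smul_le {N : X → X} {ΔtFE : ℝ}
    (hN : IsForwardEulerContractive N ΔtFE) (L : X →L[ℝ] X)
    (hL : ∀ (v : X) (τ : ℝ), 0 ≤ τ → ‖(exp (τ • L)) v‖ ≤ ‖v‖)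
    {ι : Type*} (S : Finset ι) {τ a k : ι → ℝ} {v : ι → X} {M : ℝ}
    (hτ : ∀ j ∈ S, 0 ≤ τ j) (ha : ∀ j ∈ S, 0 ≤ a j) (hk : ∀ j ∈ S, 0 ≤ k j)
    (hka : ∀ j ∈ S, k j ≤ a j * ΔtFE) (hsum : ∑ j ∈ S, a j = 1) (hv : ∀ j ∈ S, ‖v j‖ ≤ M) :
    ‖∑ j ∈ S, (exp (τ j • L)) (a j • v j + k j • N (v j))‖ ≤ M :=
  calc ‖∑ j ∈ S, (exp (τ j • L)) (a j • v j + k j • N (v j))‖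
      ≤ ∑ j ∈ S, a j * M := norm_sum_le_of_le S fun j hj =>
        calc ‖(exp (τ j • L)) (a j • v j + k j • N (v j))‖
            ≤ ‖a j • v j + k j • N (v j)‖ := hL _ _ (hτ j hj)
          _ ≤ a j * ‖v j‖ := hN.norm_smul_add_smul_le _ (ha j hj) (hk j hj) (hka j hj)
          _ ≤ a j * M := mul_le_mul_of_nonneg_left (hv j hj) (ha j hj)
    _ = M := by rw [← sum_mul, hsum, one_mul]

end ForwardEuler

theorem mul_le_mul_of_le_ratio {Δt ΔtFE C a b : ℝ} (hΔtFE : 0 ≤ ΔtFE) (hΔt : Δt ≤ C * ΔtFE)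
    (ha : 0 ≤ a) (hb : 0 ≤ b) (hC : 0 < b → C ≤ a / b) : Δt * b ≤ a * ΔtFE := by
  rcases hb.eq_or_lt with rfl | hb
  · simpa using mul_nonneg ha hΔtFE
  have hCb : C * b ≤ a := (le_div_iff₀ hb).1 (hC hb)
  calc Δt * b ≤ C * ΔtFE * b := mul_le_mul_of_nonneg_right hΔt hb.le
    _ = C * b * ΔtFE := by ring
    _ ≤ a * ΔtFE := mul_le_mul_of_nonneg_right hCb hΔtFE

theorem ssp_integrating_factor_RK_general
    {X : Type*} [NormedAddCommGroup X] [NormedSpace ℝ X]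
    (L : X →L[ℝ] X) (N : X → X) (ΔtFE : ℝ) (hΔtFE : 0 < ΔtFE)
    (hL : ∀ (v : X) (τ : ℝ), 0 ≤ τ → ‖(exp (τ • L)) v‖ ≤ ‖v‖)
    (hN : ∀ (v : X) (h : ℝ), 0 ≤ h → h ≤ ΔtFE → ‖v + h • N v‖ ≤ ‖v‖)
    (s : ℕ) (α β : ℕ → ℕ → ℝ) (c : ℕ → ℝ)
    (hα : ∀ i j, j < i → i ≤ s → 0 ≤ α i j)
    (hβ : ∀ i j, j < i → i ≤ s → 0 ≤ β i j)
    (hconsistent : ∀ i, 1 ≤ i → i ≤ s → ∑ j ∈ range i, α i j = 1)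
    (hcmono : ∀ j i, j ≤ i → i ≤ s → c j ≤ c i)
    (C : ℝ)
    (hCmin : ∀ i j, j < i → i ≤ s → 0 < β i j → C ≤ α i j / β i j)
    (Δt : ℝ) (hΔt0 : 0 ≤ Δt) (hΔt : Δt ≤ C * ΔtFE)
    (un : X) (u : ℕ → X) (hu0 : u 0 = un)
    (hstage : ∀ i, 1 ≤ i → i ≤ s →
      u i = ∑ j ∈ range i,
        (exp (((c i - c j) * Δt) • L)) (α i j • u j + (Δt * β i j) • N (u j))) :
    (∀ i, i ≤ s → ‖u i‖ ≤ ‖un‖) ∧ ‖u s‖ ≤ ‖un‖ := by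
  have hstages : ∀ i, i ≤ s → ‖u i‖ ≤ ‖un‖ := by
    intro i
    induction i using Nat.strong_induction_on with
    | _ i ih =>
      intro his
      rcases Nat.eq_zero_or_pos i with rfl | hi
      · rw [hu0]
      have hlt : ∀ j ∈ range i, j < i := fun j hj => mem_range.1 hj
      rw [hstage i hi his]
      exact IsForwardEulerContractive.norm_sum_exp_smul_le hN L hL _
        (fun j hj => mul_nonneg (sub_nonneg.2 (hcmono j i (hlt j hj).le his)) hΔt0)
        (fun j hj => hα i j (hlt j hj) his)
        (fun j hj => mul_nonneg hΔt0 (hβ i j (hlt j hj) his))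
        (fun j hj => mul_le_mul_of_le_ratio hΔtFE.le hΔt (hα i j (hlt j hj) his)
          (hβ i j (hlt j hj) his) (hCmin i j (hlt j hj) his))
        (hconsistent i hi his) (fun j hj => ih j (hlt j hj) ((hlt j hj).le.trans his))
  exact ⟨hstages, hstages s le_rfl⟩

/-- SSP property of explicit integrating factor Runge–Kutta methods in Shu–Osher
form with non-decreasing abscissas: each stage satisfies `‖u^{(i)}‖ ≤ ‖u^n‖`,
in particular `‖u^{n+1}‖ = ‖u^{(s)}‖ ≤ ‖u^n‖`. -/
theorem ssp_integrating_factor_RK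
    {X : Type*} [NormedAddCommGroup X] [NormedSpace ℝ X] [CompleteSpace X]
    (L : X →L[ℝ] X) (N : X → X) (ΔtFE : ℝ) (hΔtFE : 0 < ΔtFE)
    (hL : ∀ (v : X) (τ : ℝ), 0 ≤ τ → ‖(exp (τ • L)) v‖ ≤ ‖v‖)
    (hN : ∀ (v : X) (h : ℝ), 0 ≤ h → h ≤ ΔtFE → ‖v + h • N v‖ ≤ ‖v‖)
    (s : ℕ) (α β : ℕ → ℕ → ℝ) (c : ℕ → ℝ)
    (hα : ∀ i j, j < i → i ≤ s → 0 ≤ α i j)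
    (hβ : ∀ i j, j < i → i ≤ s → 0 ≤ β i j)
    (hzero : ∀ i j, j < i → i ≤ s → α i j = 0 → β i j = 0)
    (hconsistent : ∀ i, 1 ≤ i → i ≤ s → ∑ j ∈ range i, α i j = 1)
    (hc0 : c 0 = 0) (hcmono : ∀ j i, j ≤ i → i ≤ s → c j ≤ c i)
    (C : ℝ) (hC : 0 < C)
    (hCmin : ∀ i j, j < i → i ≤ s → 0 < β i j → C ≤ α i j / β i j)
    (Δt : ℝ) (hΔt0 : 0 ≤ Δt) (hΔt : Δt ≤ C * ΔtFE)
    (un : X) (u : ℕ → X) (hu0 : u 0 = un)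
    (hstage : ∀ i, 1 ≤ i → i ≤ s →
      u i = ∑ j ∈ range i,
        (exp (((c i - c j) * Δt) • L)) (α i j • u j + (Δt * β i j) • N (u j))) :
    (∀ i, i ≤ s → ‖u i‖ ≤ ‖un‖) ∧ ‖u s‖ ≤ ‖un‖ :=
  ssp_integrating_factor_RK_general L N ΔtFE hΔtFE hL hN s α β c hα hβ hconsistent hcmono C hCmin Δt
    hΔt0 hΔt un u hu0 hstage
end

section
/- For the explicit Runge–Kutta method in Shu–Osher form u^{(i)} = ∑_{j<i}(α_{ij} u^{(j)} + Δt β_{ij} F(u^{(j)})), with all α_{ij}, β_{ij} ≥ 0, ∑_{j<i} α_{ij} = 1, and β_{ij} = 0 whenever α_{ij} = 0: if F satisfies the forward Euler condition ‖u + hF(u)‖ ≤ ‖u‖ for 0 ≤ h ≤ Δt_FE, then ‖u^{(i)}‖ ≤ ‖u^n‖ for each stage i, provided Δt ≤ (min_{i,j: β_{ij}>0} α_{ij}/β_{ij})·Δt_FE. -/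
/-!
Each stage is a convex combination, with weights `α i j`, of the scaled forward Euler steps
`u j + (Δt * β i j / α i j) • F (u j)`. The time-step restriction makes every such step length
at most `ΔtFE`, so each step does not increase the norm, and by the triangle inequality neither
does their convex combination; strong induction over the stages concludes.
-/

open Finset

def SatisfiesForwardEuler {X : Type*} [NormedAddCommGroup X] [NormedSpace ℝ X]
    (F : X → X) (ΔtFE : ℝ) : Prop :=
  ∀ (v : X) (h : ℝ), 0 ≤ h → h ≤ ΔtFE → ‖v + h • F v‖ ≤ ‖v‖

theorem SatisfiesForwardEuler.norm_smul_add_smul_le {X : Type*} [NormedAddCommGroup X]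
    [NormedSpace ℝ X] {F : X → X} {ΔtFE : ℝ} (hF : SatisfiesForwardEuler F ΔtFE) (v : X)
    {a h : ℝ} (ha : 0 ≤ a) (hh : 0 ≤ h) (hle : h ≤ a * ΔtFE) :
    ‖a • v + h • F v‖ ≤ a * ‖v‖ := by
  rcases ha.eq_or_lt with rfl | ha
  · obtain rfl : h = 0 := by linarith
    simp
  have hsplit : a • v + h • F v = a • (v + (h / a) • F v) := by
    rw [smul_add, smul_smul, mul_div_cancel₀ h ha.ne']
  rw [hsplit, norm_smul, Real.norm_of_nonneg ha.le]
  refine mul_le_mul_of_nonneg_left (hF v _ (div_nonneg hh ha.le) ?_) ha.le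
  rwa [div_le_iff₀ ha, mul_comm]

theorem mul_le_mul_of_le_div_of_le_mul {a b C Δt ΔtFE : ℝ} (ha : 0 ≤ a)
    (hCab : 0 < b → C ≤ a / b) (hΔt0 : 0 ≤ Δt) (hΔt : Δt ≤ C * ΔtFE) (hΔtFE : 0 ≤ ΔtFE) :
    Δt * b ≤ a * ΔtFE := by
  rcases le_or_gt b 0 with hb | hb
  · exact (mul_nonpos_of_nonneg_of_nonpos hΔt0 hb).trans (mul_nonneg ha hΔtFE)
  have hCb : C * b ≤ a := (le_div_iff₀ hb).mp (hCab hb)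
  calc Δt * b ≤ C * ΔtFE * b := mul_le_mul_of_nonneg_right hΔt hb.le
    _ = C * b * ΔtFE := by ring
    _ ≤ a * ΔtFE := mul_le_mul_of_nonneg_right hCb hΔtFE

theorem norm_sum_le_of_norm_le_mul {ι X : Type*} [SeminormedAddCommGroup X] {s : Finset ι}
    {x : ι → X} {w : ι → ℝ} {M : ℝ} (hw : ∑ j ∈ s, w j = 1)
    (hx : ∀ j ∈ s, ‖x j‖ ≤ w j * M) : ‖∑ j ∈ s, x j‖ ≤ M := by
  calc ‖∑ j ∈ s, x j‖ ≤ ∑ j ∈ s, w j * M := norm_sum_le_of_le s hx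
    _ = M := by rw [← sum_mul, hw, one_mul]

theorem ssp_shu_osher_RK_general
    {X : Type*} [NormedAddCommGroup X] [NormedSpace ℝ X]
    (F : X → X) (ΔtFE : ℝ) (hΔtFE : 0 < ΔtFE)
    (hFE : ∀ (v : X) (h : ℝ), 0 ≤ h → h ≤ ΔtFE → ‖v + h • F v‖ ≤ ‖v‖)
    (s : ℕ) (α β : ℕ → ℕ → ℝ)
    (hα : ∀ i j, j < i → i ≤ s → 0 ≤ α i j)
    (hβ : ∀ i j, j < i → i ≤ s → 0 ≤ β i j)
    (hconsistent : ∀ i, 1 ≤ i → i ≤ s → ∑ j ∈ range i, α i j = 1)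
    (C : ℝ)
    (hCmin : ∀ i j, j < i → i ≤ s → 0 < β i j → C ≤ α i j / β i j)
    (Δt : ℝ) (hΔt0 : 0 ≤ Δt) (hΔt : Δt ≤ C * ΔtFE)
    (un : X) (u : ℕ → X) (hu0 : u 0 = un)
    (hstage : ∀ i, 1 ≤ i → i ≤ s →
      u i = ∑ j ∈ range i, (α i j • u j + (Δt * β i j) • F (u j))) :
    ∀ i, i ≤ s → ‖u i‖ ≤ ‖un‖ := by
  intro i
  induction i using Nat.strong_induction_on with
  | _ i ih =>
  intro his
  rcases Nat.eq_zero_or_pos i with rfl | hi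
  · rw [hu0]
  rw [hstage i hi his]
  refine norm_sum_le_of_norm_le_mul (hconsistent i hi his) fun j hj => ?_
  have hji : j < i := mem_range.mp hj
  have hαij : 0 ≤ α i j := hα i j hji his
  have hstep : Δt * β i j ≤ α i j * ΔtFE :=
    mul_le_mul_of_le_div_of_le_mul hαij (hCmin i j hji his) hΔt0 hΔt hΔtFE.le
  calc ‖α i j • u j + (Δt * β i j) • F (u j)‖ ≤ α i j * ‖u j‖ :=
        SatisfiesForwardEuler.norm_smul_add_smul_le hFE (u j) hαij
          (mul_nonneg hΔt0 (hβ i j hji his)) hstep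
    _ ≤ α i j * ‖un‖ := mul_le_mul_of_nonneg_left (ih j hji (hji.le.trans his)) hαij

/-- SSP property of explicit Runge–Kutta methods in Shu–Osher form:
if `F` satisfies the forward Euler condition, then every stage satisfies
`‖u^{(i)}‖ ≤ ‖u^n‖` under the time-step restriction `Δt ≤ C·Δt_FE`
where `C = min α_{ij}/β_{ij}` over pairs with `β_{ij} > 0`. -/
theorem ssp_shu_osher_RK
    {X : Type*} [NormedAddCommGroup X] [NormedSpace ℝ X]
    (F : X → X) (ΔtFE : ℝ) (hΔtFE : 0 < ΔtFE)
    (hFE : ∀ (v : X) (h : ℝ), 0 ≤ h → h ≤ ΔtFE → ‖v + h • F v‖ ≤ ‖v‖)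
    (s : ℕ) (α β : ℕ → ℕ → ℝ)
    (hα : ∀ i j, j < i → i ≤ s → 0 ≤ α i j)
    (hβ : ∀ i j, j < i → i ≤ s → 0 ≤ β i j)
    (hzero : ∀ i j, j < i → i ≤ s → α i j = 0 → β i j = 0)
    (hconsistent : ∀ i, 1 ≤ i → i ≤ s → ∑ j ∈ range i, α i j = 1)
    (C : ℝ) (hC : 0 < C)
    (hCmin : ∀ i j, j < i → i ≤ s → 0 < β i j → C ≤ α i j / β i j)
    (Δt : ℝ) (hΔt0 : 0 ≤ Δt) (hΔt : Δt ≤ C * ΔtFE)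
    (un : X) (u : ℕ → X) (hu0 : u 0 = un)
    (hstage : ∀ i, 1 ≤ i → i ≤ s →
      u i = ∑ j ∈ range i, (α i j • u j + (Δt * β i j) • F (u j))) :
    ∀ i, i ≤ s → ‖u i‖ ≤ ‖un‖ :=
  ssp_shu_osher_RK_general F ΔtFE hΔtFE hFE s α β hα hβ hconsistent C hCmin Δt hΔt0 hΔt un u hu0
    hstage
end

section
/- The optimal three-stage third-order explicit SSP Runge–Kutta method with non-decreasing abscissas has SSP coefficient at most 3/4. Precisely: there is no explicit 3-stage Runge–Kutta method satisfying the third-order conditions b^T e = 1, b^T c = 1/2, b^T(c∘c) = 1/3, b^T A c = 1/6, with nonnegative Shu–Osher coefficients α_{ij}, β_{ij} satisfying α_{ij} > (3/4)β_{ij} for all i,j with β_{ij} > 0, and with non-decreasing abscissas 0 = c_1 ≤ c_2 ≤ c_3. -/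
/-!
Write `u = b₂c₂` and `v = b₃c₃`, so that the second-order condition reads `u + v = 1/2`.
Since `b₃ ≥ 0` and `c₂ ≤ c₃`, the third-order condition `b₂c₂² + b₃c₃² = 1/3` forces `c₂ ≤ 2/3`.
On the other hand, `α₃₂ > (3/4)β₃₂` gives `b₂ > (3/4)b₃a₃₂`, hence `u > 1/8` and `v < 3/8`, while
`α₂₁ > (3/4)β₂₁` gives `c₃ > a₃₂(1 + (3/4)c₂)`, hence `v c₂ > 1/6 + c₂/8`; together these force
`c₂ > 2/3`.
-/

section ThreeStageOrderConditions

variable {b₂ b₃ c₂ c₃ a₃₂ : ℝ}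

theorem second_abscissa_le_two_thirds (hb₃ : 0 ≤ b₃) (hc₂ : 0 ≤ c₂) (hc₂₃ : c₂ ≤ c₃)
    (h₂ : b₂ * c₂ + b₃ * c₃ = 1 / 2) (h₃ : b₂ * c₂ ^ 2 + b₃ * c₃ ^ 2 = 1 / 3) :
    c₂ ≤ 2 / 3 := by
  have key : b₃ * c₃ * (c₃ - c₂) = 1 / 3 - c₂ / 2 := by
    linear_combination h₃ - c₂ * h₂
  nlinarith [mul_nonneg (mul_nonneg hb₃ (hc₂.trans hc₂₃)) (sub_nonneg.2 hc₂₃)]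

theorem two_thirds_lt_second_abscissa (hb₃ : 0 < b₃) (hc₂ : 0 < c₂)
    (hb₂ : 3 / 4 * (b₃ * a₃₂) < b₂) (hc₃ : a₃₂ * (1 + 3 / 4 * c₂) < c₃)
    (h₂ : b₂ * c₂ + b₃ * c₃ = 1 / 2) (h₄ : b₃ * a₃₂ * c₂ = 1 / 6) :
    2 / 3 < c₂ := by
  have hu : 1 / 8 < b₂ * c₂ := by nlinarith [mul_lt_mul_of_pos_right hb₂ hc₂]
  have hv : 1 / 6 + c₂ / 8 < b₃ * c₃ * c₂ := by
    nlinarith [mul_lt_mul_of_pos_left hc₃ (mul_pos hb₃ hc₂)]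
  have hv_lt : b₃ * c₃ < 3 / 8 := by linarith
  nlinarith [mul_lt_mul_of_pos_right hv_lt hc₂]

end ThreeStageOrderConditions

/-- There is no explicit 3-stage Runge–Kutta method satisfying the third-order
conditions, with nonnegative Shu–Osher coefficients satisfying
`α_{ij} > (3/4)β_{ij}` whenever `β_{ij} > 0`, and non-decreasing abscissas
`0 = c_1 ≤ c_2 ≤ c_3`.  Hence the optimal `eSSPRK⁺(3,3)` method has SSP
coefficient at most `3/4`. -/
theorem no_eSSPRKplus33_with_C_gt_three_quarters :
    ¬ ∃ (α10 α20 α21 α30 α31 α32 β10 β20 β21 β30 β31 β32 : ℝ),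
      0 ≤ α10 ∧ 0 ≤ α20 ∧ 0 ≤ α21 ∧ 0 ≤ α30 ∧ 0 ≤ α31 ∧ 0 ≤ α32 ∧
      0 ≤ β10 ∧ 0 ≤ β20 ∧ 0 ≤ β21 ∧ 0 ≤ β30 ∧ 0 ≤ β31 ∧ 0 ≤ β32 ∧
      α10 = 1 ∧ α20 + α21 = 1 ∧ α30 + α31 + α32 = 1 ∧
      (0 < β10 → α10 > (3/4) * β10) ∧
      (0 < β20 → α20 > (3/4) * β20) ∧
      (0 < β21 → α21 > (3/4) * β21) ∧
      (0 < β30 → α30 > (3/4) * β30) ∧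
      (0 < β31 → α31 > (3/4) * β31) ∧
      (0 < β32 → α32 > (3/4) * β32) ∧
      -- Butcher coefficients and abscissas
      (let a21 := β10
       let a31 := β20 + α21 * β10
       let a32 := β21
       let b1 := α32 * α21 * β10 + α31 * β10 + α32 * β20 + β30
       let b2 := α32 * β21 + β31
       let b3 := β32
       let c2 := a21
       let c3 := a31 + a32
       -- non-decreasing abscissas 0 = c1 ≤ c2 ≤ c3
       0 ≤ c2 ∧ c2 ≤ c3 ∧
       -- third-order conditions
       b1 + b2 + b3 = 1 ∧
       b2 * c2 + b3 * c3 = 1/2 ∧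
       b2 * c2 ^ 2 + b3 * c3 ^ 2 = 1/3 ∧
       b3 * a32 * c2 = 1/6) := by
  rintro ⟨α10, α20, α21, α30, α31, α32, β10, β20, β21, β30, β31, β32,
    -, -, -, -, -, -, -, hβ20, hβ21, -, hβ31, hβ32, -, -, -,
    -, -, ssp21, -, -, ssp32, hc₂, hc₂₃, -, h₂, h₃, h₄⟩
  have hne : β32 * β21 * β10 ≠ 0 := by rw [h₄]; norm_num
  obtain ⟨h3221, h10⟩ := mul_ne_zero_iff.mp hne
  obtain ⟨h32, h21⟩ := mul_ne_zero_iff.mp h3221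
  have hpos32 : 0 < β32 := hβ32.lt_of_ne' h32
  have hpos21 : 0 < β21 := hβ21.lt_of_ne' h21
  have hpos10 : 0 < β10 := hc₂.lt_of_ne' h10
  have hb₂ : 3 / 4 * (β32 * β21) < α32 * β21 + β31 := by
    nlinarith [mul_lt_mul_of_pos_right (ssp32 hpos32) hpos21]
  have hc₃ : β21 * (1 + 3 / 4 * β10) < β20 + α21 * β10 + β21 := by
    nlinarith [mul_lt_mul_of_pos_right (ssp21 hpos21) hpos10]
  exact (two_thirds_lt_second_abscissa hpos32 hpos10 hb₂ hc₃ h₂ h₄).not_ge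
    (second_abscissa_le_two_thirds hβ32 hc₂ hc₂₃ h₂ h₃)
end

section
/- In the equal-abscissa case of the 3-stage 3rd order SSP method with c_2 = c_3 = 2/3, Butcher coefficients a_{21} = 2/3, a_{31} = 2/3 − 1/(4ω), a_{32} = 1/(4ω), b = (1/4, 3/4 − ω, ω): the conditions b_2 > (3/4)·b_3·a_{32} and a_{31} > (3/4)·a_{32}·a_{21} (with ω > 0) are contradictory — the first forces ω < 9/16 and the second forces ω > 9/16. -/
theorem lt_nine_sixteenths_of_b2_gt {ω : ℝ} (h : 3/4 - ω > (3/4) * ω * (1/(4*ω))) :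
    ω < 9/16 := by
  rcases eq_or_ne ω 0 with rfl | hω
  · norm_num
  have hrhs : (3/4) * ω * (1/(4*ω)) = 3/16 := by field_simp; ring
  linarith

theorem nine_sixteenths_lt_of_a31_gt {ω : ℝ} (hω : 0 < ω)
    (h : 2/3 - 1/(4*ω) > (3/4) * (1/(4*ω)) * (2/3)) : 9/16 < ω := by
  have hdiff : 2/3 - 1/(4*ω) - (3/4) * (1/(4*ω)) * (2/3) = (16*ω - 9) / (24*ω) := by
    field_simp; ring
  have hpos : 0 < (16*ω - 9) / (24*ω) := by linarith
  have hnum := (div_pos_iff_of_pos_right (by positivity : (0:ℝ) < 24*ω)).mp hpos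
  linarith

/-- Equal-abscissa case `c_2 = c_3 = 2/3` of the 3-stage third-order SSP method:
with `a_{21} = 2/3`, `a_{31} = 2/3 − 1/(4ω)`, `a_{32} = 1/(4ω)`,
`b = (1/4, 3/4 − ω, ω)`, the condition `b_2 > (3/4)·b_3·a_{32}` forces
`ω < 9/16`, the condition `a_{31} > (3/4)·a_{32}·a_{21}` forces `ω > 9/16`,
and hence the two conditions are contradictory. -/
theorem equal_abscissa_case_contradiction (ω : ℝ) (hω : 0 < ω) :
    ((3/4 - ω > (3/4) * ω * (1/(4*ω))) → ω < 9/16) ∧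
    ((2/3 - 1/(4*ω) > (3/4) * (1/(4*ω)) * (2/3)) → ω > 9/16) ∧
    ¬ ((3/4 - ω > (3/4) * ω * (1/(4*ω))) ∧
       (2/3 - 1/(4*ω) > (3/4) * (1/(4*ω)) * (2/3))) :=
  ⟨lt_nine_sixteenths_of_b2_gt, nine_sixteenths_lt_of_a31_gt hω, fun ⟨h₁, h₂⟩ =>
    (lt_nine_sixteenths_of_b2_gt h₁).not_gt (nine_sixteenths_lt_of_a31_gt hω h₂)⟩
end
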